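/- arXiv:1703.02226 — 3 statements merged into one kernel-verified Lean document; each statement's English description precedes it below -/
import Mathlib

section
/- Let q : ℝ → ℂ be any function, let k ∈ ℂ, and let v₁, v₂ : ℝ → ℂ be differentiable functions satisfying the AKNS scattering system with reverse space-time Sine-Gordon symmetry reduction, i.e. for all x ∈ ℝ: v₁'(x) = -i k v₁(x) + q(x) v₂(x) and v₂'(x) = -q(-x) v₁(x) + i k v₂(x). Then the functions w₁(x) := v₂(-x) and w₂(x) := v₁(-x) solve the same system: for all x ∈ ℝ, w₁'(x) = -i k w₁(x) + q(x) w₂(x) and w₂'(x) = -q(-x) w₁(x) + i k w₂(x). -/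
/-!
Reflecting `x ↦ -x` and swapping the two components maps solutions of the AKNS system with
potentials `(q, r)` to solutions with potentials `(-r(-·), -q(-·))`: the sign change from the
chain rule turns `∓ik` into `±ik`, which the swap restores. The reduction `r(x) = -q(-x)` is
exactly the condition that this pair of potentials is `(q, r)` again.
-/

open Complex

def IsAKNSSolution (q r : ℝ → ℂ) (k : ℂ) (v₁ v₂ : ℝ → ℂ) : Prop :=
  (∀ x, deriv v₁ x = -I * k * v₁ x + q x * v₂ x) ∧
  (∀ x, deriv v₂ x = r x * v₁ x + I * k * v₂ x)

theorem IsAKNSSolution.reflect_swap {q r : ℝ → ℂ} {k : ℂ} {v₁ v₂ : ℝ → ℂ}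
    (hv : IsAKNSSolution q r k v₁ v₂) :
    IsAKNSSolution (fun x => -r (-x)) (fun x => -q (-x)) k (fun x => v₂ (-x))
      (fun x => v₁ (-x)) := by
  constructor <;> intro x <;> rw [deriv_comp_neg]
  · rw [hv.2]; ring
  · rw [hv.1]; ring

theorem akns_sineGordon_symmetry_general (q : ℝ → ℂ) (k : ℂ) (v₁ v₂ : ℝ → ℂ)
    (h₁ : ∀ x : ℝ, deriv v₁ x = -Complex.I * k * v₁ x + q x * v₂ x)
    (h₂ : ∀ x : ℝ, deriv v₂ x = -q (-x) * v₁ x + Complex.I * k * v₂ x)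
    (w₁ w₂ : ℝ → ℂ)
    (hw₁ : ∀ x : ℝ, w₁ x = v₂ (-x))
    (hw₂ : ∀ x : ℝ, w₂ x = v₁ (-x)) :
    (∀ x : ℝ, deriv w₁ x = -Complex.I * k * w₁ x + q x * w₂ x) ∧
    (∀ x : ℝ, deriv w₂ x = -q (-x) * w₁ x + Complex.I * k * w₂ x) := by
  have hv : IsAKNSSolution q (fun x => -q (-x)) k v₁ v₂ := ⟨h₁, h₂⟩
  have hw : IsAKNSSolution q (fun x => -q (-x)) k w₁ w₂ := by
    simpa only [neg_neg, ← funext hw₁, ← funext hw₂] using hv.reflect_swap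
  exact hw

/-- If `(v₁, v₂)` solves the AKNS scattering problem with the reverse space-time
Sine-Gordon symmetry reduction `r(x) = -q(-x)`, then `(w₁, w₂) = (v₂(-·), v₁(-·))`
solves the same system. -/
theorem akns_sineGordon_symmetry (q : ℝ → ℂ) (k : ℂ) (v₁ v₂ : ℝ → ℂ)
    (hv₁ : Differentiable ℝ v₁) (hv₂ : Differentiable ℝ v₂)
    (h₁ : ∀ x : ℝ, deriv v₁ x = -Complex.I * k * v₁ x + q x * v₂ x)
    (h₂ : ∀ x : ℝ, deriv v₂ x = -q (-x) * v₁ x + Complex.I * k * v₂ x)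
    (w₁ w₂ : ℝ → ℂ)
    (hw₁ : ∀ x : ℝ, w₁ x = v₂ (-x))
    (hw₂ : ∀ x : ℝ, w₂ x = v₁ (-x)) :
    (∀ x : ℝ, deriv w₁ x = -Complex.I * k * w₁ x + q x * w₂ x) ∧
    (∀ x : ℝ, deriv w₂ x = -q (-x) * w₁ x + Complex.I * k * w₂ x) :=
  akns_sineGordon_symmetry_general q k v₁ v₂ h₁ h₂ w₁ w₂ hw₁ hw₂
end

section
/- Let q₀ > 0, α ∈ ℝ, and θ₊ ∈ (0, π) with θ₊ ≠ π/2. Define η(x,t) := q₀ x cos θ₊ - (α t / 2) cot θ₊, and define q, s : ℝ × ℝ → ℂ by q(x,t) := q₀ e^{i α t} [ i sin θ₊ + cos θ₊ · tanh(η(x,t)) ] and s(x,t) := -(1/2) q₀ α cos θ₊ cot θ₊ · sech²(η(x,t)). Then for all (x,t) ∈ ℝ²: (i) ∂_x ∂_t q(x,t) + 2 s(x,t) q(x,t) = 0; (ii) ∂_x s(x,t) = ∂_t ( q(x,t) q(-x,-t) ); and (iii) s(-x,-t) = s(x,t). That is, q is an exact (dark) one-soliton solution of the nonlocal reverse space-time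 Sine-Gordon equation. -/
/-!
Put `σ = sin θ₊`, `γ = cos θ₊`, `a = q₀ γ`, `b = -(α/2) cot θ₊`, `T = tanh η`, `S = sech²η`,
so that `η = a x + b t`, `q = q₀ e^{iαt} (iσ + γ T)` and `s = a b S`.
From `T' = S` and `S' = -2 S T` one gets `q_{xt} = q₀ e^{iαt} γ a S (iα - 2 b T)`, hence
`q_{xt} + 2 s q = i q₀ a e^{iαt} S (α γ + 2 b σ)`; it vanishes as `cos θ₊ = cot θ₊ sin θ₊`.
As `η` is odd, `q(x,t) q(-x,-t) = -q₀² (σ² + γ² T²)` is real, and its `t`-derivative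
`-2 q₀² γ² b S T` agrees with `s_x = -2 a² b S T` because `a = q₀ γ`.
-/

open Complex (I)

theorem Real.hasDerivAt_tanh (u : ℝ) : HasDerivAt Real.tanh ((1 / Real.cosh u) ^ 2) u := by
  have hc := (Real.cosh_pos u).ne'
  have h := (Real.hasDerivAt_sinh u).div (Real.hasDerivAt_cosh u) hc
  rw [← show Real.tanh = Real.sinh / Real.cosh from funext Real.tanh_eq_sinh_div_cosh] at h
  refine h.congr_deriv ?_
  field_simp
  linear_combination Real.cosh_sq_sub_sinh_sq u

theorem Real.hasDerivAt_sech_sq (u : ℝ) :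
    HasDerivAt (fun v => (1 / Real.cosh v) ^ 2) (-2 * (1 / Real.cosh u) ^ 2 * Real.tanh u) u := by
  have hc := (Real.cosh_pos u).ne'
  refine (((hasDerivAt_const u (1 : ℝ)).div (Real.hasDerivAt_cosh u) hc).pow 2).congr_deriv ?_
  rw [Real.tanh_eq_sinh_div_cosh, Pi.div_apply]
  norm_num
  field_simp

theorem HasDerivAt.tanh {f : ℝ → ℝ} {f' x : ℝ} (hf : HasDerivAt f f' x) :
    HasDerivAt (fun y => Real.tanh (f y)) ((1 / Real.cosh (f x)) ^ 2 * f') x :=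
  (Real.hasDerivAt_tanh (f x)).comp x hf

theorem HasDerivAt.sech_sq {f : ℝ → ℝ} {f' x : ℝ} (hf : HasDerivAt f f' x) :
    HasDerivAt (fun y => (1 / Real.cosh (f y)) ^ 2)
      (-2 * (1 / Real.cosh (f x)) ^ 2 * Real.tanh (f x) * f') x :=
  (Real.hasDerivAt_sech_sq (f x)).comp x hf

noncomputable def darkSoliton (q₀ α σ γ a b x t : ℝ) : ℂ :=
  q₀ * Complex.exp (I * α * t) * (I * σ + γ * Real.tanh (a * x + b * t))

noncomputable def darkSolitonField (a b x t : ℝ) : ℂ :=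
  ((a * b * (1 / Real.cosh (a * x + b * t)) ^ 2 : ℝ) : ℂ)

theorem hasDerivAt_phase_space (a b x t : ℝ) : HasDerivAt (fun y => a * y + b * t) a x :=
  (((hasDerivAt_id x).const_mul a).add_const (b * t)).congr_deriv (mul_one a)

theorem hasDerivAt_phase_time (a b x t : ℝ) : HasDerivAt (fun τ => a * x + b * τ) b t :=
  (((hasDerivAt_id t).const_mul b).const_add (a * x)).congr_deriv (mul_one b)

section

variable {q₀ α σ γ a b : ℝ}

theorem hasDerivAt_darkSoliton_time (x t : ℝ) :
    HasDerivAt (darkSoliton q₀ α σ γ a b x)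
      (q₀ * Complex.exp (I * α * t) * (I * α * (I * σ + γ * Real.tanh (a * x + b * t)) +
        γ * b * ((1 / Real.cosh (a * x + b * t)) ^ 2 : ℝ))) t := by
  have hphase : HasDerivAt (fun τ : ℝ => I * α * τ) (I * α) t := by
    simpa using (hasDerivAt_id t).ofReal_comp.const_mul (I * α)
  have htanh := (hasDerivAt_phase_time a b x t).tanh.ofReal_comp
  refine ((hphase.cexp.const_mul (q₀ : ℂ)).mul
    ((htanh.const_mul (γ : ℂ)).const_add (I * σ))).congr_deriv ?_
  generalize Real.tanh (a * x + b * t) = T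
  generalize (1 / Real.cosh (a * x + b * t)) ^ 2 = S
  push_cast
  ring

theorem hasDerivAt_deriv_darkSoliton_time (x t : ℝ) :
    HasDerivAt (fun y => deriv (darkSoliton q₀ α σ γ a b y) t)
      (q₀ * Complex.exp (I * α * t) * γ * a * ((1 / Real.cosh (a * x + b * t)) ^ 2 : ℝ) *
        (I * α - 2 * b * Real.tanh (a * x + b * t))) x := by
  have htanh := (hasDerivAt_phase_space a b x t).tanh.ofReal_comp
  have hsech := (hasDerivAt_phase_space a b x t).sech_sq.ofReal_comp
  rw [funext fun y => (hasDerivAt_darkSoliton_time y t).deriv]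
  refine ((((htanh.const_mul (γ : ℂ)).const_add (I * σ)).const_mul (I * α)).add
    (hsech.const_mul (γ * b : ℂ))).const_mul (q₀ * Complex.exp (I * α * t)) |>.congr_deriv ?_
  generalize Real.tanh (a * x + b * t) = T
  generalize (1 / Real.cosh (a * x + b * t)) ^ 2 = S
  push_cast
  ring

theorem darkSoliton_mul_darkSoliton_neg (x t : ℝ) :
    darkSoliton q₀ α σ γ a b x t * darkSoliton q₀ α σ γ a b (-x) (-t) =
      ((-(q₀ ^ 2 * (σ ^ 2 + γ ^ 2 * Real.tanh (a * x + b * t) ^ 2)) : ℝ) : ℂ) := by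
  have hexp : Complex.exp (I * α * (-t : ℝ)) = (Complex.exp (I * α * t))⁻¹ := by
    rw [Complex.ofReal_neg, mul_neg, Complex.exp_neg]
  have hexp_ne := Complex.exp_ne_zero (I * α * t)
  rw [darkSoliton, darkSoliton, hexp, show a * -x + b * -t = -(a * x + b * t) by ring,
    Real.tanh_neg]
  generalize Real.tanh (a * x + b * t) = T
  push_cast
  field_simp
  linear_combination (q₀ ^ 2 * σ ^ 2 : ℂ) * Complex.I_sq

theorem darkSoliton_sineGordon (h : α * γ + 2 * b * σ = 0) (x t : ℝ) :
    deriv (fun y => deriv (darkSoliton q₀ α σ γ a b y) t) x +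
      2 * darkSolitonField a b x t * darkSoliton q₀ α σ γ a b x t = 0 := by
  rw [(hasDerivAt_deriv_darkSoliton_time x t).deriv, darkSolitonField, darkSoliton]
  generalize Real.tanh (a * x + b * t) = T
  generalize (1 / Real.cosh (a * x + b * t)) ^ 2 = S
  have h' : (α * γ + 2 * b * σ : ℂ) = 0 := by exact_mod_cast h
  push_cast
  linear_combination (q₀ * Complex.exp (I * α * t) * I * a * S : ℂ) * h'

theorem deriv_darkSolitonField_eq_deriv_darkSoliton_mul_neg (h : a ^ 2 = q₀ ^ 2 * γ ^ 2)
    (x t : ℝ) :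
    deriv (fun y => darkSolitonField a b y t) x =
      deriv (fun τ => darkSoliton q₀ α σ γ a b x τ *
        darkSoliton q₀ α σ γ a b (-x) (-τ)) t := by
  have hfield := ((hasDerivAt_phase_space a b x t).sech_sq.const_mul (a * b)).ofReal_comp
  have hprod := ((((hasDerivAt_phase_time a b x t).tanh.fun_pow 2).const_mul (γ ^ 2)).const_add
    (σ ^ 2) |>.const_mul (q₀ ^ 2) |>.fun_neg).ofReal_comp
  rw [funext fun τ => darkSoliton_mul_darkSoliton_neg x τ, hprod.deriv]
  unfold darkSolitonField
  rw [hfield.deriv]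
  generalize Real.tanh (a * x + b * t) = T
  generalize (1 / Real.cosh (a * x + b * t)) ^ 2 = S
  have h' : (a ^ 2 : ℂ) = q₀ ^ 2 * γ ^ 2 := by exact_mod_cast h
  push_cast
  linear_combination (-2 * b * S * T : ℂ) * h'

theorem darkSolitonField_neg (x t : ℝ) :
    darkSolitonField a b (-x) (-t) = darkSolitonField a b x t := by
  rw [darkSolitonField, darkSolitonField, show a * -x + b * -t = -(a * x + b * t) by ring,
    Real.cosh_neg]

end

theorem rst_sineGordon_dark_one_soliton_general (q₀ α θp : ℝ)
    (hθ : θp ∈ Set.Ioo 0 Real.pi)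
    (η : ℝ → ℝ → ℝ)
    (hη : ∀ x t : ℝ, η x t = q₀ * x * Real.cos θp - α * t / 2 * Real.cot θp)
    (q s : ℝ → ℝ → ℂ)
    (hq : ∀ x t : ℝ, q x t =
      (q₀ : ℂ) * Complex.exp (Complex.I * (α : ℂ) * (t : ℂ)) *
        (Complex.I * (Real.sin θp : ℂ) + (Real.cos θp : ℂ) * (Real.tanh (η x t) : ℂ)))
    (hs : ∀ x t : ℝ, s x t =
      ((-(1 / 2) * q₀ * α * Real.cos θp * Real.cot θp * (1 / Real.cosh (η x t)) ^ 2 : ℝ) : ℂ)) :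
    (∀ x t : ℝ,
      deriv (fun y : ℝ => deriv (fun τ : ℝ => q y τ) t) x + 2 * s x t * q x t = 0) ∧
    (∀ x t : ℝ,
      deriv (fun y : ℝ => s y t) x = deriv (fun τ : ℝ => q x τ * q (-x) (-τ)) t) ∧
    (∀ x t : ℝ, s (-x) (-t) = s x t) := by
  have hphase : ∀ x t, η x t = q₀ * Real.cos θp * x + -(α / 2 * Real.cot θp) * t :=
    fun x t => by rw [hη]; ring
  have hq' : q = darkSoliton q₀ α (Real.sin θp) (Real.cos θp) (q₀ * Real.cos θp)
      (-(α / 2 * Real.cot θp)) := by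
    funext x t; rw [hq, hphase]; rfl
  have hs' : s = darkSolitonField (q₀ * Real.cos θp) (-(α / 2 * Real.cot θp)) := by
    funext x t; rw [hs, hphase, darkSolitonField]; ring_nf
  subst hq' hs'
  have hsin : Real.sin θp ≠ 0 := (Real.sin_pos_of_pos_of_lt_pi hθ.1 hθ.2).ne'
  have hbalance : α * Real.cos θp + 2 * -(α / 2 * Real.cot θp) * Real.sin θp = 0 := by
    rw [Real.cot_eq_cos_div_sin]; field_simp; ring
  exact ⟨darkSoliton_sineGordon hbalance,
    deriv_darkSolitonField_eq_deriv_darkSoliton_mul_neg (by ring), darkSolitonField_neg⟩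

/-- The dark one-soliton `q(x,t) = q₀ e^{iαt} (i sin θ₊ + cos θ₊ tanh η)`,
`η = q₀ x cos θ₊ - (αt/2) cot θ₊`, together with
`s = -(1/2) q₀ α cos θ₊ cot θ₊ sech² η`, is an exact solution of the nonlocal
reverse space-time Sine-Gordon equation `q_{xt} + 2sq = 0`,
`s_x = ∂_t(q(x,t)q(-x,-t))`, with `s(-x,-t) = s(x,t)`. -/
theorem rst_sineGordon_dark_one_soliton (q₀ α θp : ℝ) (hq₀ : 0 < q₀)
    (hθ : θp ∈ Set.Ioo 0 Real.pi) (hθ' : θp ≠ Real.pi / 2)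
    (η : ℝ → ℝ → ℝ)
    (hη : ∀ x t : ℝ, η x t = q₀ * x * Real.cos θp - α * t / 2 * Real.cot θp)
    (q s : ℝ → ℝ → ℂ)
    (hq : ∀ x t : ℝ, q x t =
      (q₀ : ℂ) * Complex.exp (Complex.I * (α : ℂ) * (t : ℂ)) *
        (Complex.I * (Real.sin θp : ℂ) + (Real.cos θp : ℂ) * (Real.tanh (η x t) : ℂ)))
    (hs : ∀ x t : ℝ, s x t =
      ((-(1 / 2) * q₀ * α * Real.cos θp * Real.cot θp * (1 / Real.cosh (η x t)) ^ 2 : ℝ) : ℂ)) :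
    (∀ x t : ℝ,
      deriv (fun y : ℝ => deriv (fun τ : ℝ => q y τ) t) x + 2 * s x t * q x t = 0) ∧
    (∀ x t : ℝ,
      deriv (fun y : ℝ => s y t) x = deriv (fun τ : ℝ => q x τ * q (-x) (-τ)) t) ∧
    (∀ x t : ℝ, s (-x) (-t) = s x t) :=
  rst_sineGordon_dark_one_soliton_general q₀ α θp hθ η hη q s hq hs
end

section
/- Let q₀ > 0, α ∈ ℝ, and θ₊ ∈ (0, π) with θ₊ ≠ π/2. Define η(x,t) := q₀ x cos θ₊ - (α t / 2) cot θ₊, and define q(x,t) := (1/2) q₀ e^{i(α t - θ₊)} [ -1 + e^{2 i θ₊} + (1 + e^{2 i θ₊}) coth(η(x,t)) ] and s(x,t) := (1/2) q₀ α cos θ₊ cot θ₊ · ( coth²(η(x,t)) - 1 ) on the open set Ω := { (x,t) : η(x,t) ≠ 0 }. Then for all (x,t) ∈ Ω: (i) ∂_x ∂_t q(x,t) + 2 s(x,t) q(x,t) = 0; (ii) ∂_x s(x,t) = ∂_t ( q(x,t) q(-x,-t) ) (note (-x,-t) ∈ Ω whenever (x,t) ∈ Ω); and (iii) s(-x,-t)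 = s(x,t). That is, q is a singular bright one-soliton solution of the nonlocal reverse space-time Sine-Gordon equation, singular exactly along the space-time line η(x,t) = 0. -/
/-!
Since `e^{-iθ}(-1 + e^{2iθ}) = 2i sin θ` and `e^{-iθ}(1 + e^{2iθ}) = 2 cos θ`, the soliton is
`q = e^{iαt} (a + k coth η)` with `a = i q₀ sin θ`, `k = q₀ cos θ` and `η = k x + ω t`,
`ω = -(α/2) cot θ`, while `s = -k ω (coth² η - 1)`. Everything then follows from the Riccati
equation `coth' = 1 - coth²` and the oddness of `coth`: `q(x,t) q(-x,-t) = a² - k² coth² η`, and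
`q_{xt} + 2 s q = e^{iαt} k (1 - coth² η) (i k α + 2 ω a)`, which vanishes because
`ω a = -(α/2) i q₀ cos θ`.
-/

open Complex

theorem Real.hasDerivAt_cosh_div_sinh {z : ℝ} (hz : z ≠ 0) :
    HasDerivAt (fun w => Real.cosh w / Real.sinh w) (1 - (Real.cosh z / Real.sinh z) ^ 2) z := by
  refine ((Real.hasDerivAt_cosh z).div (Real.hasDerivAt_sinh z)
    (Real.sinh_ne_zero.mpr hz)).congr_deriv ?_
  field_simp

theorem half_exp_sub_mul_eq (φ θ u : ℂ) :
    (1 / 2) * cexp (I * (φ - θ)) * (-1 + cexp (2 * I * θ) + (1 + cexp (2 * I * θ)) * u) =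
      cexp (I * φ) * (I * sin θ + cos θ * u) := by
  have hE : cexp (θ * I) * cexp (-θ * I) = 1 := by rw [← Complex.exp_add]; simp
  have h2 : cexp (2 * I * θ) = cexp (θ * I) ^ 2 := by rw [← Complex.exp_nat_mul]; ring_nf
  have hsplit : cexp (I * (φ - θ)) = cexp (I * φ) * cexp (-θ * I) := by
    rw [← Complex.exp_add]; ring_nf
  rw [hsplit, h2, sin, cos]
  linear_combination (1 / 2) * cexp (I * φ) * (cexp (θ * I) + cexp (θ * I) * u) * hE
    - (1 / 2) * cexp (I * φ) * (cexp (-θ * I) - cexp (θ * I)) * I_sq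

noncomputable def sgWave (f : ℝ → ℝ) (a : ℂ) (k ω α x t : ℝ) : ℂ :=
  cexp (I * (α * t)) * (a + k * f (k * x + ω * t))

noncomputable def sgField (f : ℝ → ℝ) (k ω x t : ℝ) : ℂ :=
  ((-(k * ω) * (f (k * x + ω * t) ^ 2 - 1) : ℝ) : ℂ)

section Riccati

variable {f : ℝ → ℝ} {a : ℂ} {k ω α x t : ℝ}

theorem sgField_neg (hodd : ∀ z, f (-z) = -f z) :
    sgField f k ω (-x) (-t) = sgField f k ω x t := by
  simp only [sgField, show k * -x + ω * -t = -(k * x + ω * t) by ring, hodd, neg_sq]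

theorem sgWave_mul_sgWave_neg (hodd : ∀ z, f (-z) = -f z) :
    sgWave f a k ω α x t * sgWave f a k ω α (-x) (-t) = a ^ 2 - k ^ 2 * f (k * x + ω * t) ^ 2 := by
  have hexp : cexp (I * (α * t)) * cexp (-(I * (α * t))) = 1 := by
    rw [← Complex.exp_add, add_neg_cancel, Complex.exp_zero]
  rw [sgWave, sgWave, show k * -x + ω * -t = -(k * x + ω * t) by ring, hodd]
  simp only [Complex.ofReal_neg, mul_neg]
  linear_combination (a + k * f (k * x + ω * t)) * (a - k * f (k * x + ω * t)) * hexp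

theorem hasDerivAt_riccati_wave_x (hf : ∀ z ≠ 0, HasDerivAt f (1 - f z ^ 2) z)
    (h : k * x + ω * t ≠ 0) :
    HasDerivAt (fun y => f (k * y + ω * t)) ((1 - f (k * x + ω * t) ^ 2) * k) x :=
  (hf _ h).comp x ((hasDerivAt_const_mul k).add_const (ω * t))

theorem hasDerivAt_riccati_wave_t (hf : ∀ z ≠ 0, HasDerivAt f (1 - f z ^ 2) z)
    (h : k * x + ω * t ≠ 0) :
    HasDerivAt (fun τ => f (k * x + ω * τ)) ((1 - f (k * x + ω * t) ^ 2) * ω) t :=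
  (hf _ h).comp t ((hasDerivAt_const_mul ω).const_add (k * x))

theorem hasDerivAt_sgWave_t (hf : ∀ z ≠ 0, HasDerivAt f (1 - f z ^ 2) z)
    (h : k * x + ω * t ≠ 0) :
    HasDerivAt (fun τ => sgWave f a k ω α x τ)
      (cexp (I * (α * t)) * (I * α * (a + k * f (k * x + ω * t)) +
        k * ω * (1 - f (k * x + ω * t) ^ 2))) t := by
  have hexp : HasDerivAt (fun τ : ℝ => cexp (I * (α * τ))) (cexp (I * (α * t)) * (I * α)) t := by
    simpa using (((hasDerivAt_id t).ofReal_comp.const_mul (α : ℂ)).const_mul I).cexp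
  have hprof := ((hasDerivAt_riccati_wave_t hf h).ofReal_comp.const_mul (k : ℂ)).const_add a
  refine (hexp.mul hprof).congr_deriv ?_
  push_cast
  ring

theorem hasDerivAt_deriv_sgWave_t (hf : ∀ z ≠ 0, HasDerivAt f (1 - f z ^ 2) z)
    (h : k * x + ω * t ≠ 0) :
    HasDerivAt (fun y => deriv (fun τ => sgWave f a k ω α y τ) t)
      (cexp (I * (α * t)) * k ^ 2 * (1 - f (k * x + ω * t) ^ 2) *
        (I * α - 2 * ω * f (k * x + ω * t))) x := by
  have hnear : ∀ᶠ y in nhds x, k * y + ω * t ≠ 0 :=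
    (by fun_prop : Continuous fun y => k * y + ω * t).continuousAt.eventually_ne h
  have hderiv : (fun y => deriv (fun τ => sgWave f a k ω α y τ) t) =ᶠ[nhds x] fun y =>
      cexp (I * (α * t)) * (I * α * (a + k * f (k * y + ω * t)) +
        k * ω * (1 - f (k * y + ω * t) ^ 2)) := by
    filter_upwards [hnear] with y hy using (hasDerivAt_sgWave_t hf hy).deriv
  have hu := (hasDerivAt_riccati_wave_x hf h).ofReal_comp
  refine HasDerivAt.congr_of_eventuallyEq ?_ hderiv
  refine ((((hu.const_mul (k : ℂ)).const_add a).const_mul (I * α)).add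
    (((hu.pow 2).const_sub 1).const_mul ((k : ℂ) * ω)) |>.const_mul _).congr_deriv ?_
  push_cast
  ring

theorem sgWave_sineGordon (hf : ∀ z ≠ 0, HasDerivAt f (1 - f z ^ 2) z)
    (ha : I * k * α = -2 * ω * a) (h : k * x + ω * t ≠ 0) :
    deriv (fun y => deriv (fun τ => sgWave f a k ω α y τ) t) x +
      2 * sgField f k ω x t * sgWave f a k ω α x t = 0 := by
  rw [(hasDerivAt_deriv_sgWave_t hf h).deriv, sgField, sgWave]
  push_cast
  linear_combination cexp (I * (α * t)) * k * (1 - f (k * x + ω * t) ^ 2) * ha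

theorem deriv_sgField_x (hf : ∀ z ≠ 0, HasDerivAt f (1 - f z ^ 2) z)
    (hodd : ∀ z, f (-z) = -f z) (h : k * x + ω * t ≠ 0) :
    deriv (fun y => sgField f k ω y t) x =
      deriv (fun τ => sgWave f a k ω α x τ * sgWave f a k ω α (-x) (-τ)) t := by
  have hs : HasDerivAt (fun y => sgField f k ω y t)
      (-(k * ω) * (2 * f (k * x + ω * t) * ((1 - f (k * x + ω * t) ^ 2) * k))) x := by
    simp only [sgField]
    push_cast
    refine ((((hasDerivAt_riccati_wave_x hf h).ofReal_comp.pow 2).sub_const 1).const_mul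
      _).congr_deriv ?_
    push_cast
    ring
  have hq : HasDerivAt (fun τ => sgWave f a k ω α x τ * sgWave f a k ω α (-x) (-τ))
      (-k ^ 2 * (2 * f (k * x + ω * t) * ((1 - f (k * x + ω * t) ^ 2) * ω))) t := by
    simp only [sgWave_mul_sgWave_neg hodd]
    refine (((hasDerivAt_riccati_wave_t hf h).ofReal_comp.pow 2).const_mul _
      |>.const_sub _).congr_deriv ?_
    push_cast
    ring
  rw [hs.deriv, hq.deriv]
  ring

end Riccati

theorem rst_sineGordon_singular_bright_one_soliton_general (q₀ α θp : ℝ)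
    (hθ : θp ∈ Set.Ioo 0 Real.pi)
    (coth : ℝ → ℝ) (hcoth : ∀ z : ℝ, coth z = Real.cosh z / Real.sinh z)
    (η : ℝ → ℝ → ℝ)
    (hη : ∀ x t : ℝ, η x t = q₀ * x * Real.cos θp - α * t / 2 * Real.cot θp)
    (q s : ℝ → ℝ → ℂ)
    (hq : ∀ x t : ℝ, q x t =
      (1 / 2 : ℂ) * (q₀ : ℂ) * Complex.exp (Complex.I * ((α * t - θp : ℝ) : ℂ)) *
        (-1 + Complex.exp (2 * Complex.I * (θp : ℂ)) +
          (1 + Complex.exp (2 * Complex.I * (θp : ℂ))) * ((coth (η x t) : ℝ) : ℂ)))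
    (hs : ∀ x t : ℝ, s x t =
      ((1 / 2 * q₀ * α * Real.cos θp * Real.cot θp * (coth (η x t) ^ 2 - 1) : ℝ) : ℂ)) :
    (∀ x t : ℝ, η x t ≠ 0 → η (-x) (-t) ≠ 0) ∧
    (∀ x t : ℝ, η x t ≠ 0 →
      deriv (fun y : ℝ => deriv (fun τ : ℝ => q y τ) t) x + 2 * s x t * q x t = 0) ∧
    (∀ x t : ℝ, η x t ≠ 0 →
      deriv (fun y : ℝ => s y t) x = deriv (fun τ : ℝ => q x τ * q (-x) (-τ)) t) ∧
    (∀ x t : ℝ, η x t ≠ 0 → s (-x) (-t) = s x t) := by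
  have hodd : ∀ z, coth (-z) = -coth z := fun z => by
    rw [hcoth, hcoth, Real.cosh_neg, Real.sinh_neg, div_neg]
  have hric : ∀ z ≠ 0, HasDerivAt coth (1 - coth z ^ 2) z := fun z hz => by
    rw [funext hcoth]
    exact Real.hasDerivAt_cosh_div_sinh hz
  have hηwave : ∀ x t, η x t = q₀ * Real.cos θp * x + -(α / 2 * Real.cot θp) * t := fun x t => by
    rw [hη]; ring
  have hqwave : q = sgWave coth (I * (q₀ * Real.sin θp)) (q₀ * Real.cos θp)
      (-(α / 2 * Real.cot θp)) α := by
    funext x t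
    rw [hq, sgWave, ← hηwave]
    push_cast
    linear_combination (q₀ : ℂ) * half_exp_sub_mul_eq (α * t) θp (coth (η x t))
  have hswave : s = sgField coth (q₀ * Real.cos θp) (-(α / 2 * Real.cot θp)) := by
    funext x t
    rw [hs, sgField, ← hηwave]
    congr 2
    ring
  have hdispersion : I * (q₀ * Real.cos θp : ℝ) * α =
      -2 * (-(α / 2 * Real.cot θp) : ℝ) * (I * (q₀ * Real.sin θp)) := by
    have hsin : Real.sin θp ≠ 0 := (Real.sin_pos_of_pos_of_lt_pi hθ.1 hθ.2).ne'
    have hcot : Real.cot θp * Real.sin θp = Real.cos θp := by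
      rw [Real.cot_eq_cos_div_sin]; field_simp
    rw [← hcot]
    push_cast
    ring
  subst hqwave hswave
  simp only [hηwave]
  exact ⟨fun x t h => by convert neg_ne_zero.mpr h using 1; ring,
    fun x t => sgWave_sineGordon hric hdispersion, fun x t => deriv_sgField_x hric hodd,
    fun x t _ => sgField_neg hodd⟩

/-- The singular bright one-soliton
`q(x,t) = (1/2) q₀ e^{i(αt - θ₊)}(-1 + e^{2iθ₊} + (1 + e^{2iθ₊}) coth η)`,
`η = q₀ x cos θ₊ - (αt/2) cot θ₊`, with
`s = (1/2) q₀ α cos θ₊ cot θ₊ (coth² η - 1)`, solves the nonlocal reverse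
space-time Sine-Gordon equation on the open set `Ω = {η ≠ 0}`; moreover `Ω` is
invariant under `(x,t) ↦ (-x,-t)` and `s(-x,-t) = s(x,t)`. -/
theorem rst_sineGordon_singular_bright_one_soliton (q₀ α θp : ℝ) (hq₀ : 0 < q₀)
    (hθ : θp ∈ Set.Ioo 0 Real.pi) (hθ' : θp ≠ Real.pi / 2)
    (coth : ℝ → ℝ) (hcoth : ∀ z : ℝ, coth z = Real.cosh z / Real.sinh z)
    (η : ℝ → ℝ → ℝ)
    (hη : ∀ x t : ℝ, η x t = q₀ * x * Real.cos θp - α * t / 2 * Real.cot θp)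
    (q s : ℝ → ℝ → ℂ)
    (hq : ∀ x t : ℝ, q x t =
      (1 / 2 : ℂ) * (q₀ : ℂ) * Complex.exp (Complex.I * ((α * t - θp : ℝ) : ℂ)) *
        (-1 + Complex.exp (2 * Complex.I * (θp : ℂ)) +
          (1 + Complex.exp (2 * Complex.I * (θp : ℂ))) * ((coth (η x t) : ℝ) : ℂ)))
    (hs : ∀ x t : ℝ, s x t =
      ((1 / 2 * q₀ * α * Real.cos θp * Real.cot θp * (coth (η x t) ^ 2 - 1) : ℝ) : ℂ)) :
    (∀ x t : ℝ, η x t ≠ 0 → η (-x) (-t) ≠ 0) ∧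
    (∀ x t : ℝ, η x t ≠ 0 →
      deriv (fun y : ℝ => deriv (fun τ : ℝ => q y τ) t) x + 2 * s x t * q x t = 0) ∧
    (∀ x t : ℝ, η x t ≠ 0 →
      deriv (fun y : ℝ => s y t) x = deriv (fun τ : ℝ => q x τ * q (-x) (-τ)) t) ∧
    (∀ x t : ℝ, η x t ≠ 0 → s (-x) (-t) = s x t) :=
  rst_sineGordon_singular_bright_one_soliton_general q₀ α θp hθ coth hcoth η hη q s hq hs
end
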